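/- Let N ≥ 2 be an integer, s ∈ (0,1), and let Ω ⊂ ℝ^N be a bounded open set. Let w be continuous on the closure of Ω, suppose that for every x ∈ Ω the principal-value limit defining (−Δ)^s_Ω w(x) exists with (−Δ)^s_Ω w(x) ≥ 0, and that w ≥ 0 on ∂Ω. Then w ≥ 0 on the closure of Ω. -/

import Mathlib

open MeasureTheory Metric Set Filter

/-- The regional fractional Laplacian `(-Δ)^s_Ω u (x) = L` as a principal-value limit
(normalizing constant taken equal to 1). -/
def regLap (N : ℕ) (s : ℝ) (Ω : Set (EuclideanSpace ℝ (Fin N)))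
    (u : EuclideanSpace ℝ (Fin N) → ℝ) (x : EuclideanSpace ℝ (Fin N)) (L : ℝ) : Prop :=
  Filter.Tendsto
    (fun ε : ℝ => ∫ z in Ω \ Metric.ball x ε, (u x - u z) / ‖x - z‖ ^ ((N : ℝ) + 2 * s))
    (nhdsWithin 0 (Set.Ioi 0)) (nhds L)

open Function Topology

/-!
Suppose `w < 0` somewhere. Its minimum `m < 0` over the compact set `closure Ω` is attained at a
point `x₀ ∈ Ω`, since `w ≥ 0` on `∂Ω`. At a minimum every truncated integral
`∫_{Ω \ B_ε(x₀)} (w x₀ - w z) / |x₀ - z|^{N+2s} dz` has a nonpositive integrand, so it can only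
decrease as `ε ↓ 0`. By continuity `w > m` on a nonempty open subset of `Ω` near a boundary point,
so the truncated integrals become strictly negative for small `ε`, and so is their limit
`(-Δ)^s_Ω w(x₀)`.
-/

theorem div_norm_rpow_nonpos_of_isMinOn {E : Type*} [SeminormedAddCommGroup E] {Ω : Set E}
    {w : E → ℝ} {x z : E} (p : ℝ) (hmin : IsMinOn w Ω x) (hz : z ∈ Ω) :
    (w x - w z) / ‖x - z‖ ^ p ≤ 0 :=
  div_nonpos_of_nonpos_of_nonneg (sub_nonpos.mpr (hmin hz)) (by positivity)

section TruncatedIntegral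

variable {E : Type*} [NormedAddCommGroup E] [MeasurableSpace E] [BorelSpace E]
  {μ : Measure E} {Ω : Set E} {w : E → ℝ} {x : E} {p ε : ℝ}

theorem integrableOn_div_norm_rpow_diff_ball [IsFiniteMeasureOnCompacts μ]
    (hK : IsCompact (closure Ω)) (hw : ContinuousOn w (closure Ω)) (hε : 0 < ε) :
    IntegrableOn (fun z => (w x - w z) / ‖x - z‖ ^ p) (Ω \ ball x ε) μ := by
  have hpos : ∀ z ∈ closure Ω \ ball x ε, 0 < ‖x - z‖ := fun z hz => by
    rw [← dist_eq_norm, dist_comm]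
    exact hε.trans_le (not_lt.mp hz.2)
  have hcont : ContinuousOn (fun z => (w x - w z) / ‖x - z‖ ^ p) (closure Ω \ ball x ε) :=
    (continuousOn_const.sub (hw.mono sdiff_subset)).div
      ((continuous_const.sub continuous_id).norm.continuousOn.rpow_const
        fun z hz => Or.inl (hpos z hz).ne')
      fun z hz => (Real.rpow_pos_of_pos (hpos z hz) p).ne'
  exact (hcont.integrableOn_compact (hK.diff isOpen_ball)).mono_set
    (sdiff_subset_sdiff_left subset_closure)

theorem monotoneOn_setIntegral_diff_ball [IsFiniteMeasureOnCompacts μ] (hΩ : IsOpen Ω)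
    (hK : IsCompact (closure Ω)) (hw : ContinuousOn w (closure Ω)) (hmin : IsMinOn w Ω x) :
    MonotoneOn (fun ε => ∫ z in Ω \ ball x ε, (w x - w z) / ‖x - z‖ ^ p ∂μ) (Ioi 0) := by
  intro ε hε ε' _ hεε'
  have hnonneg : 0 ≤ᵐ[μ.restrict (Ω \ ball x ε)] fun z => -((w x - w z) / ‖x - z‖ ^ p) :=
    ae_restrict_of_forall_mem (hΩ.measurableSet.diff measurableSet_ball) fun z hz =>
      neg_nonneg.mpr (div_norm_rpow_nonpos_of_isMinOn p hmin hz.1)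
  have hsub : Ω \ ball x ε' ⊆ Ω \ ball x ε := sdiff_subset_sdiff_right (ball_subset_ball hεε')
  have := setIntegral_mono_set (integrableOn_div_norm_rpow_diff_ball hK hw hε).neg hnonneg
    hsub.eventuallyLE
  simpa only [Pi.neg_apply, integral_neg, neg_le_neg_iff] using this

theorem setIntegral_diff_ball_neg [IsFiniteMeasureOnCompacts μ] [μ.IsOpenPosMeasure]
    (hΩ : IsOpen Ω) (hK : IsCompact (closure Ω)) (hw : ContinuousOn w (closure Ω))
    (hmin : IsMinOn w Ω x) {q : E} (hq : q ∈ Ω) (hxq : w x < w q) (hε : 0 < ε)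
    (hεq : ε < dist x q) :
    ∫ z in Ω \ ball x ε, (w x - w z) / ‖x - z‖ ^ p ∂μ < 0 := by
  set f := fun z => (w x - w z) / ‖x - z‖ ^ p
  set U := (Ω ∩ w ⁻¹' Ioi (w x)) \ closedBall x ε
  have hU : IsOpen U :=
    ((hw.mono subset_closure).isOpen_inter_preimage hΩ isOpen_Ioi).sdiff isClosed_closedBall
  have hqU : q ∈ U := ⟨⟨hq, hxq⟩, fun h => (mem_closedBall'.mp h).not_gt hεq⟩
  have hUsupp : U ⊆ support (-f) ∩ (Ω \ ball x ε) := by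
    rintro z ⟨⟨hzΩ, hwz⟩, hzx⟩
    have hdist : ε < dist x z := by simpa [mem_closedBall', dist_comm] using hzx
    have hfz : f z < 0 := div_neg_of_neg_of_pos (sub_neg.mpr hwz)
      (Real.rpow_pos_of_pos (dist_eq_norm x z ▸ hε.trans hdist) p)
    exact ⟨neg_ne_zero.mpr hfz.ne, hzΩ, fun h => (mem_ball'.mp h).not_gt hdist⟩
  have hpos : 0 < ∫ z in Ω \ ball x ε, -f z ∂μ := by
    rw [setIntegral_pos_iff_support_of_nonneg_ae
      (ae_restrict_of_forall_mem (hΩ.measurableSet.diff measurableSet_ball) fun z hz =>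
        neg_nonneg.mpr (div_norm_rpow_nonpos_of_isMinOn p hmin hz.1))
      (integrableOn_div_norm_rpow_diff_ball hK hw hε).neg]
    exact (hU.measure_pos μ ⟨q, hqU⟩).trans_le (measure_mono hUsupp)
  rw [integral_neg] at hpos
  exact neg_pos.mp hpos

theorem neg_of_tendsto_setIntegral_diff_ball [IsFiniteMeasureOnCompacts μ] [μ.IsOpenPosMeasure]
    (hΩ : IsOpen Ω) (hK : IsCompact (closure Ω)) (hw : ContinuousOn w (closure Ω))
    (hmin : IsMinOn w Ω x) {q : E} (hq : q ∈ Ω) (hxq : w x < w q) {L : ℝ}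
    (hL : Tendsto (fun ε => ∫ z in Ω \ ball x ε, (w x - w z) / ‖x - z‖ ^ p ∂μ)
      (𝓝[>] 0) (𝓝 L)) :
    L < 0 := by
  have hd : 0 < dist x q := dist_pos.mpr (ne_of_apply_ne w hxq.ne)
  have hε₀ : 0 < dist x q / 2 := half_pos hd
  have hL_le : L ≤ ∫ z in Ω \ ball x (dist x q / 2), (w x - w z) / ‖x - z‖ ^ p ∂μ :=
    le_of_tendsto hL <| eventually_of_mem (Ioc_mem_nhdsGT hε₀) fun ε hε =>
      monotoneOn_setIntegral_diff_ball hΩ hK hw hmin hε.1 hε₀ hε.2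
  exact hL_le.trans_lt
    (setIntegral_diff_ball_neg hΩ hK hw hmin hq hxq hε₀ (half_lt_self hd))

end TruncatedIntegral

theorem exists_mem_lt_of_nonneg_on_frontier {E : Type*} [NormedAddCommGroup E] [NormedSpace ℝ E]
    [Nontrivial E] {Ω : Set E} {w : E → ℝ} (hb : Bornology.IsBounded Ω) (hne : Ω.Nonempty)
    (hw : ContinuousOn w (closure Ω)) (hbd : ∀ x ∈ frontier Ω, 0 ≤ w x) {m : ℝ} (hm : m < 0) :
    ∃ q ∈ Ω, m < w q := by
  have hΩ_ne_univ : Ω ≠ univ := fun h => NormedSpace.unbounded_univ ℝ E (h ▸ hb)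
  obtain ⟨y, hy⟩ := nonempty_frontier_iff.mpr ⟨hne, hΩ_ne_univ⟩
  have hy_cl : y ∈ closure Ω := frontier_subset_closure hy
  have : NeBot (𝓝[Ω] y) := mem_closure_iff_nhdsWithin_neBot.mp hy_cl
  have hev : ∀ᶠ z in 𝓝[Ω] y, m < w z := ((hw y hy_cl).mono subset_closure).eventually
    (Ioi_mem_nhds (hm.trans_le (hbd y hy)))
  exact (hev.and self_mem_nhdsWithin).exists.imp fun z hz => ⟨hz.2, hz.1⟩

theorem stmt4_general (N : ℕ) (hN : 2 ≤ N) (s : ℝ)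
    (Ω : Set (EuclideanSpace ℝ (Fin N))) (hΩo : IsOpen Ω) (hΩb : Bornology.IsBounded Ω)
    (w : EuclideanSpace ℝ (Fin N) → ℝ) (hw : ContinuousOn w (closure Ω))
    (hlap : ∀ x ∈ Ω, ∃ L : ℝ, regLap N s Ω w x L ∧ 0 ≤ L)
    (hbd : ∀ x ∈ frontier Ω, 0 ≤ w x) :
    ∀ x ∈ closure Ω, 0 ≤ w x := by
  intro x hx
  by_contra! hneg
  have hK : IsCompact (closure Ω) := hΩb.isCompact_closure
  obtain ⟨x₀, hx₀, hmin⟩ := hK.exists_isMinOn ⟨x, hx⟩ hw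
  have hm : w x₀ < 0 := (hmin hx).trans_lt hneg
  have hx₀Ω : x₀ ∈ Ω := by
    by_contra h
    exact (hbd x₀ (hΩo.frontier_eq ▸ ⟨hx₀, h⟩)).not_gt hm
  have : Nonempty (Fin N) := ⟨⟨0, by omega⟩⟩
  obtain ⟨q, hq, hxq⟩ := exists_mem_lt_of_nonneg_on_frontier hΩb ⟨x₀, hx₀Ω⟩ hw hbd hm
  obtain ⟨L, hL, hL0⟩ := hlap x₀ hx₀Ω
  exact (neg_of_tendsto_setIntegral_diff_ball hΩo hK hw (hmin.on_subset subset_closure) hq hxq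
    hL).not_ge hL0

/-- comparison/maximum principle: if `(-Δ)^s_Ω w ≥ 0` in `Ω` and `w ≥ 0`
on `∂Ω`, then `w ≥ 0` on the closure of `Ω`. -/
theorem stmt4 (N : ℕ) (hN : 2 ≤ N) (s : ℝ) (hs : s ∈ Set.Ioo (0 : ℝ) 1)
    (Ω : Set (EuclideanSpace ℝ (Fin N))) (hΩo : IsOpen Ω) (hΩb : Bornology.IsBounded Ω)
    (w : EuclideanSpace ℝ (Fin N) → ℝ) (hw : ContinuousOn w (closure Ω))
    (hlap : ∀ x ∈ Ω, ∃ L : ℝ, regLap N s Ω w x L ∧ 0 ≤ L)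
    (hbd : ∀ x ∈ frontier Ω, 0 ≤ w x) :
    ∀ x ∈ closure Ω, 0 ≤ w x :=
  stmt4_general N hN s Ω hΩo hΩb w hw hlap hbd
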